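/- arXiv:2111.05606 — 2 statements merged into one kernel-verified Lean document; each statement's English description precedes it below -/
import Mathlib

section
/- Andréief's identity: for functions f_1,…,f_N and g_1,…,g_N in L^2(E, ω), the integral over E^N of det(f_j(x_i))_{i,j=1}^N · det(g_j(x_i))_{i,j=1}^N with respect to dω(x_1)⋯dω(x_N) equals N! times det(∫_E f_i(x) g_j(x) dω(x))_{i,j=1}^N. -/
/-!
Expanding both determinants by the Leibniz formula writes the integrand as a signed double sum
over permutations `σ, τ` of `∏ i, f (σ i) (x i) * g (τ i) (x i)`. By Fubini each term integrates
to `∏ i, ∫ f (σ i) * g (τ i)`, and after the substitution `τ = ρ * σ` every inner sum over `τ`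
is the Leibniz expansion of `det (∫ f i * g j)`, leaving `N!` copies of it.
-/

open MeasureTheory Equiv Finset

namespace Matrix

variable {n R : Type*} [Fintype n] [DecidableEq n] [CommRing R]

theorem det_eq_sum_sign_mul_prod_apply_perm (A : Matrix n n R) :
    A.det = ∑ σ : Perm n, ((Perm.sign σ : ℤ) : R) * ∏ i, A i (σ i) := by
  rw [← det_transpose, det_apply']
  rfl

theorem det_mul_det_eq_sum_sum (A B : Matrix n n R) :
    A.det * B.det = ∑ σ : Perm n, ∑ τ : Perm n,
      ((Perm.sign σ : ℤ) : R) * ((Perm.sign τ : ℤ) : R) * ∏ i, A i (σ i) * B i (τ i) := by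
  simp_rw [det_eq_sum_sign_mul_prod_apply_perm, sum_mul_sum, prod_mul_distrib]
  refine sum_congr rfl fun σ _ => sum_congr rfl fun τ _ => ?_
  ring

theorem sum_sign_mul_sign_mul_prod_apply_perm (M : Matrix n n R) :
    ∑ σ : Perm n, ∑ τ : Perm n,
      ((Perm.sign σ : ℤ) : R) * ((Perm.sign τ : ℤ) : R) * ∏ i, M (σ i) (τ i)
      = (Fintype.card n).factorial * M.det := by
  have inner (σ : Perm n) : ∑ τ : Perm n,
      ((Perm.sign σ : ℤ) : R) * ((Perm.sign τ : ℤ) : R) * ∏ i, M (σ i) (τ i) = M.det := by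
    rw [det_eq_sum_sign_mul_prod_apply_perm, ← Equiv.sum_comp (Equiv.mulRight σ)]
    refine sum_congr rfl fun ρ _ => ?_
    have hprod : ∏ i, M (σ i) ((ρ * σ) i) = ∏ i, M i (ρ i) :=
      Equiv.prod_comp σ fun i => M i (ρ i)
    have hsign : ((Perm.sign σ : ℤ) : R) * ((Perm.sign (ρ * σ) : ℤ) : R)
        = ((Perm.sign ρ : ℤ) : R) := by
      rw [Perm.sign_mul, Units.val_mul, Int.cast_mul, mul_left_comm, ← Int.cast_mul,
        ← Units.val_mul, Int.units_mul_self, Units.val_one, Int.cast_one, mul_one]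
    simp only [coe_mulRight, hprod, hsign]
  simp only [inner, sum_const, card_univ, Fintype.card_perm, nsmul_eq_mul]

end Matrix

theorem andreief_identity_general
    {E : Type*} [MeasurableSpace E] (ω : Measure E) [SigmaFinite ω]
    (N : ℕ) (f g : Fin N → E → ℂ)
    (hint : ∀ i j, Integrable (fun x => f i x * g j x) ω) :
    (∫ x : Fin N → E,
        Matrix.det (Matrix.of fun i j : Fin N => f j (x i)) *
          Matrix.det (Matrix.of fun i j : Fin N => g j (x i))
        ∂(Measure.pi fun _ => ω))
      = (Nat.factorial N : ℂ) *
          Matrix.det (Matrix.of fun i j : Fin N => ∫ x, f i x * g j x ∂ω) := by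
  have hterm (σ τ : Perm (Fin N)) :
      Integrable (fun x : Fin N → E => ∏ i, f (σ i) (x i) * g (τ i) (x i))
        (Measure.pi fun _ => ω) :=
    Integrable.fintype_prod fun i => hint (σ i) (τ i)
  have hfactor (σ τ : Perm (Fin N)) :
      ∫ x : Fin N → E, ∏ i, f (σ i) (x i) * g (τ i) (x i) ∂(Measure.pi fun _ => ω)
        = ∏ i, ∫ x, f (σ i) x * g (τ i) x ∂ω :=
    integral_fintype_prod_eq_prod fun i x => f (σ i) x * g (τ i) x
  simp_rw [Matrix.det_mul_det_eq_sum_sum, Matrix.of_apply]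
  rw [integral_finsetSum _ fun σ _ => integrable_finsetSum _ fun τ _ => (hterm σ τ).const_mul _]
  simp_rw [integral_finsetSum _ fun τ _ => (hterm _ τ).const_mul _, integral_const_mul, hfactor]
  simpa only [Matrix.of_apply, Fintype.card_fin] using
    Matrix.sum_sign_mul_sign_mul_prod_apply_perm (Matrix.of fun i j : Fin N => ∫ x, f i x * g j x ∂ω)

/-- Andréief's identity. For measurable functions `f₁,…,f_N, g₁,…,g_N`
with all products `f_i·g_j` integrable, the integral over `E^N` of the product of the two
determinants `det(f_j(x_i))·det(g_j(x_i))` equals `N!·det(∫ f_i g_j dω)`. -/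
theorem andreief_identity
    {E : Type*} [MeasurableSpace E] (ω : Measure E) [SigmaFinite ω]
    (N : ℕ) (f g : Fin N → E → ℂ)
    (hf : ∀ i, Measurable (f i)) (hg : ∀ j, Measurable (g j))
    (hint : ∀ i j, Integrable (fun x => f i x * g j x) ω) :
    (∫ x : Fin N → E,
        Matrix.det (Matrix.of fun i j : Fin N => f j (x i)) *
          Matrix.det (Matrix.of fun i j : Fin N => g j (x i))
        ∂(Measure.pi fun _ => ω))
      = (Nat.factorial N : ℂ) *
          Matrix.det (Matrix.of fun i j : Fin N => ∫ x, f i x * g j x ∂ω) :=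
  andreief_identity_general ω N f g hint
end

section
/- Generalized Giambelli formula: let (h_{r,s})_{r∈ℤ, s≥0} be a family of commuting indeterminates with h_{0,s} = 1 for all s ≥ 0 and h_{r,s} = 0 for all r < 0, s ≥ 0. For a Young diagram λ with N ≥ ℓ(λ), define s̃_λ = det(h_{λ_i−i+j, j−1})_{i,j=1}^N. Then, if λ = (p_1,…,p_d | q_1,…,q_d) in Frobenius notation, s̃_λ = det(s̃_{(p_i|q_j)})_{i,j=1}^d, and this value is independent of the choice of N ≥ ℓ(λ). -/
/-!
For `m ≥ d` the `m`-th row of the Jacobi–Trudi matrix of `λ` is row `m - λ_m` of the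
unitriangular matrix `E = (h_{j-i, j})` of the empty partition, while for `a < d` it is the hook
row `(h_{p_a+1+j, j})_j`. The numbers `q_a` (`a < d`) and `m - λ_m` (`m ≥ d`) enumerate
`{0, …, N-1}`, so a row permutation of sign `(-1)^{Σ q_a}` (row `a < d` is in exactly `q_a`
inversions) turns the Jacobi–Trudi matrix into `E` with its rows `q_a` replaced by the hook rows
for `p_a`. Bazin's identity, proved by multiplying with `adj E` (which yields the identity matrix
outside the rows `q_b`), writes the determinant of such a matrix as the `d × d` determinant of the
matrices with a single row replaced. The case `d = 1` identifies each of these with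
`(-1)^{q_b} s̃_{(p_a|q_b)}`, and the signs cancel. A zero part `λ_m` contributes a last row
`(0, …, 0, 1)`, so the determinant does not depend on `N`.
-/

/-- Generalized hook "Schur function" built from a doubly-indexed family
`h : ℤ → ℕ → R` via the generalized Jacobi–Trudi determinant
`s̃_{(p|q)} = det(h_{λ_i-i+j, j-1})` of size `q+1`, for the hook `(p|q) = (p+1, 1^q)`
(indices `0`-indexed, so the second index of the `(i,j)` entry is `j`). -/
noncomputable def genHookSchur {R : Type*} [CommRing R] (h : ℤ → ℕ → R) (p q : ℕ) : R :=
  Matrix.det (Matrix.of fun i j : Fin (q + 1) =>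
    h ((if (i : ℕ) = 0 then (p : ℤ) + 1 else 1) - (i : ℕ) + (j : ℕ)) (j : ℕ))

open Matrix Finset

namespace Matrix

variable {m n R : Type*} [Fintype m] [DecidableEq m] [Fintype n] [DecidableEq n] [CommRing R]

theorem det_updateRow_eq_vecMul_adjugate (C : Matrix n n R) (k : n) (w : n → R) :
    (C.updateRow k w).det = (w ᵥ* C.adjugate) k := by
  rw [← cramer_transpose_apply, cramer_eq_adjugate_mulVec, ← adjugate_transpose, mulVec_transpose]

theorem det_eq_det_submatrix_of_row_eq_one (E : Matrix n n R) (q : m → n)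
    (hq : Function.Injective q) (hE : ∀ i, i ∉ Set.range q → E i = (1 : Matrix n n R) i) :
    E.det = (E.submatrix q q).det := by
  rw [twoBlockTriangular_det E (· ∈ Set.range q)]
  · have hone : toSquareBlockProp E (fun i => i ∉ Set.range q) = 1 := by
      ext i j
      simp [toSquareBlockProp, toBlock_apply, hE i i.2, one_apply, Subtype.ext_iff]
    rw [hone, det_one, mul_one]
    convert (det_submatrix_equiv_self (Equiv.ofInjective q hq)
      (toSquareBlockProp E (· ∈ Set.range q))).symm using 2
    ext a b
    simp [toSquareBlockProp, toBlock_apply]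
  · intro i hi j hj
    rw [hE i hi, one_apply_ne]
    rintro rfl
    exact hi hj

theorem det_det_updateRow (C : Matrix n n R) (hC : C.det = 1) (q : m → n)
    (hq : Function.Injective q) (v : m → n → R) (D : Matrix n n R)
    (hDq : ∀ b, D (q b) = v b) (hDC : ∀ i, i ∉ Set.range q → D i = C i) :
    (of fun a b => (C.updateRow (q b) (v a)).det).det = D.det := by
  have hadj : C.adjugate.det = 1 := by rw [det_adjugate, hC, one_pow]
  have hrow : ∀ i, (D * C.adjugate) i = D i ᵥ* C.adjugate := fun i => rfl
  have hbase : ∀ i, i ∉ Set.range q → (D * C.adjugate) i = (1 : Matrix n n R) i := by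
    intro i hi
    rw [hrow, hDC i hi, show C i ᵥ* C.adjugate = (C * C.adjugate) i from rfl, mul_adjugate, hC,
      one_smul]
  calc (of fun a b => (C.updateRow (q b) (v a)).det).det
      = ((D * C.adjugate).submatrix q q).det := by
        congr 1
        ext a b
        simp [det_updateRow_eq_vecMul_adjugate, hrow, hDq]
    _ = D.det := by
        rw [← det_eq_det_submatrix_of_row_eq_one _ q hq hbase, det_mul, hadj, mul_one]

end Matrix

namespace Equiv.Perm

variable {n : ℕ}

theorem prod_Ioi_ite_eq_neg_one_pow (σ : Perm (Fin n)) (i : Fin n) (hi : ∀ j < i, σ i < σ j) :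
    ∏ j ∈ Ioi i, (if σ i < σ j then (1 : ℤˣ) else -1) = (-1) ^ (σ i : ℕ) := by
  have hinv : (Ioi i).filter (fun j => ¬σ i < σ j) = (Iio (σ i)).map σ.symm.toEmbedding := by
    ext j
    simp only [mem_filter, mem_Ioi, not_lt, mem_map_equiv, mem_Iio, symm_symm]
    constructor
    · rintro ⟨hij, hle⟩
      exact hle.lt_of_ne fun he => hij.ne (σ.injective he).symm
    · intro hlt
      refine ⟨lt_of_not_ge fun hji => ?_, hlt.le⟩
      obtain hji | rfl := hji.lt_or_eq
      · exact (hi j hji).not_gt hlt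
      · exact hlt.false
  rw [prod_ite, prod_const_one, one_mul, prod_const, hinv, card_map, Fin.card_Iio]

theorem sign_eq_prod_of_strictAnti_castLE {d : ℕ} (hdn : d ≤ n) (σ : Perm (Fin n))
    (hanti : StrictAnti (σ ∘ Fin.castLE hdn))
    (hmono : ∀ i j : Fin n, d ≤ (i : ℕ) → i < j → σ i < σ j) :
    sign σ = ∏ b : Fin d, (-1) ^ (σ (Fin.castLE hdn b) : ℕ) := by
  rw [sign_eq_prod_prod_Ioi, ← prod_subset (subset_univ (univ.map (Fin.castLEEmb hdn))), prod_map]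
  · refine prod_congr rfl fun b _ => prod_Ioi_ite_eq_neg_one_pow σ _ fun j hj => ?_
    have hjd : (j : ℕ) < d := (Fin.lt_def.mp hj).trans b.isLt
    exact hanti (show (⟨j, hjd⟩ : Fin d) < b from hj)
  · intro i _ hi
    refine prod_eq_one fun j hj => if_pos (hmono i j ?_ (mem_Ioi.mp hj))
    by_contra hid
    exact hi (mem_map.mpr ⟨⟨i, by omega⟩, mem_univ _, rfl⟩)

end Equiv.Perm

theorem Set.eq_Iio_ncard_of_isLowerSet {s : Set ℕ} (hs : IsLowerSet s) (hfin : s.Finite) :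
    s = Set.Iio s.ncard := by
  obtain h | ⟨a, rfl⟩ := hs.eq_univ_or_Iio
  · exact absurd (h ▸ hfin) Set.infinite_univ
  · rw [Set.ncard_Iio_nat]

namespace Giambelli

variable {R : Type*}

def jacobiTrudiMatrix (h : ℤ → ℕ → R) (lam : ℕ → ℕ) (n : ℕ) : Matrix (Fin n) (Fin n) R :=
  of fun i j : Fin n => h ((lam i : ℤ) - (i : ℕ) + (j : ℕ)) (j : ℕ)

def hookRow (h : ℤ → ℕ → R) (n p : ℕ) : Fin n → R :=
  fun j => h ((p : ℤ) + 1 + (j : ℕ)) (j : ℕ)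

section Determinant

variable [CommRing R] (h : ℤ → ℕ → R)

theorem det_jacobiTrudiMatrix_zero (h0 : ∀ s, h 0 s = 1)
    (hneg : ∀ r : ℤ, r < 0 → ∀ s, h r s = 0) (n : ℕ) :
    (jacobiTrudiMatrix h 0 n).det = 1 := by
  rw [det_of_isUpperTriangular]
  · exact prod_eq_one fun i _ => by simp [jacobiTrudiMatrix, h0]
  · intro i j (hji : j < i)
    exact hneg _ (by simp only [Pi.zero_apply, CharP.cast_eq_zero]; omega) _

theorem det_jacobiTrudiMatrix_succ (h0 : ∀ s, h 0 s = 1)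
    (hneg : ∀ r : ℤ, r < 0 → ∀ s, h r s = 0) (lam : ℕ → ℕ) {n : ℕ} (hn : lam n = 0) :
    (jacobiTrudiMatrix h lam (n + 1)).det = (jacobiTrudiMatrix h lam n).det := by
  rw [det_succ_row _ (Fin.last n), Fintype.sum_eq_single (Fin.last n)]
  · have hsign : (-1 : R) ^ (n + n) = 1 := (Even.add_self n).neg_one_pow
    simp only [jacobiTrudiMatrix, of_apply, Fin.val_last, hn, hsign, Fin.succAbove_last,
      CharP.cast_eq_zero, zero_sub, neg_add_cancel, h0, mul_one, one_mul]
    rfl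
  · intro j hj
    have hjn : (j : ℕ) < n := Fin.val_lt_last hj
    rw [show jacobiTrudiMatrix h lam (n + 1) (Fin.last n) j = 0 from
      hneg _ (by simp only [Fin.val_last, hn]; omega) _, mul_zero, zero_mul]

theorem det_jacobiTrudiMatrix_eq_of_le (h0 : ∀ s, h 0 s = 1)
    (hneg : ∀ r : ℤ, r < 0 → ∀ s, h r s = 0) {lam : ℕ → ℕ} {n : ℕ}
    (hlen : ∀ i, n ≤ i → lam i = 0) {m : ℕ} (hnm : n ≤ m) :
    (jacobiTrudiMatrix h lam m).det = (jacobiTrudiMatrix h lam n).det := by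
  induction m, hnm using Nat.le_induction with
  | base => rfl
  | succ m hm ih => rw [det_jacobiTrudiMatrix_succ h h0 hneg lam (hlen m hm), ih]

theorem det_jacobiTrudiMatrix_eq (h0 : ∀ s, h 0 s = 1)
    (hneg : ∀ r : ℤ, r < 0 → ∀ s, h r s = 0) {lam : ℕ → ℕ} {N N' : ℕ}
    (hlen : ∀ i, N ≤ i → lam i = 0) (hlen' : ∀ i, N' ≤ i → lam i = 0) :
    (jacobiTrudiMatrix h lam N).det = (jacobiTrudiMatrix h lam N').det := by
  rw [← det_jacobiTrudiMatrix_eq_of_le h h0 hneg hlen (le_max_left N N'),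
    det_jacobiTrudiMatrix_eq_of_le h h0 hneg hlen' (le_max_right N N')]

end Determinant

theorem lt_iff_lt_of_ncard_eq {lam : ℕ → ℕ} (hmono : Antitone lam) {N : ℕ}
    (hlen : ∀ i, N ≤ i → lam i = 0) {a c : ℕ} (hc : {j | a < lam j}.ncard = c) (j : ℕ) :
    a < lam j ↔ j < c := by
  have hlower : IsLowerSet {j | a < lam j} := fun _ _ hle hx => lt_of_lt_of_le hx (hmono hle)
  have hfin : {j | a < lam j}.Finite :=
    (Set.finite_Iio N).subset fun j (hj : a < lam j) => Set.mem_Iio.mpr <|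
      lt_of_not_ge fun hNj => by simp [hlen j hNj] at hj
  have := Set.eq_Iio_ncard_of_isLowerSet hlower hfin
  rw [hc] at this
  exact Set.ext_iff.mp this j

/-- `λ = (P|Q)` in Frobenius notation with `d` diagonal boxes and at most `N` rows (rows,
columns and diagonal boxes numbered from `0`). -/
structure IsFrobenius (lam : ℕ → ℕ) (N d : ℕ) (P Q : ℕ → ℕ) : Prop where
  antitone : Antitone lam
  eq_zero_of_le : ∀ i, N ≤ i → lam i = 0
  lt_iff_lt : ∀ i, i < d ↔ i < lam i
  arm : ∀ a, a < d → lam a = P a + a + 1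
  leg : ∀ a, a < d → ∀ j, a < lam j ↔ j < Q a + a + 1

def frobeniusIndex (lam : ℕ → ℕ) (d : ℕ) (Q : ℕ → ℕ) (m : ℕ) : ℕ :=
  if m < d then Q m else m - lam m

namespace IsFrobenius

variable {lam : ℕ → ℕ} {N d : ℕ} {P Q : ℕ → ℕ}

theorem apply_le_self (hF : IsFrobenius lam N d P Q) {m : ℕ} (hm : d ≤ m) : lam m ≤ m :=
  not_lt.mp fun h => ((hF.lt_iff_lt m).mpr h).not_ge hm

theorem d_le (hF : IsFrobenius lam N d P Q) : d ≤ N := by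
  by_contra! hNd
  have := (hF.lt_iff_lt N).mp hNd
  rw [hF.eq_zero_of_le N le_rfl] at this
  exact Nat.not_lt_zero _ this

theorem leg_add_lt (hF : IsFrobenius lam N d P Q) {a : ℕ} (ha : a < d) : Q a + a < N := by
  by_contra! hN
  have := (hF.leg a ha (Q a + a)).mpr (by omega)
  rw [hF.eq_zero_of_le _ hN] at this
  exact Nat.not_lt_zero _ this

theorem leg_strictAnti (hF : IsFrobenius lam N d P Q) {a b : ℕ} (hab : a < b) (hb : b < d) :
    Q b < Q a := by
  have := (hF.leg b hb (Q b + b)).mpr (by omega)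
  have := (hF.leg a (hab.trans hb) (Q b + b)).mp (by omega)
  omega

theorem leg_ne_sub (hF : IsFrobenius lam N d P Q) {a m : ℕ} (ha : a < d) (hm : d ≤ m) :
    Q a ≠ m - lam m := by
  have := hF.leg a ha m
  have := hF.apply_le_self hm
  omega

theorem sub_apply_lt_sub_apply (hF : IsFrobenius lam N d P Q) {m m' : ℕ} (hm : d ≤ m)
    (hmm' : m < m') : m - lam m < m' - lam m' := by
  have := hF.antitone hmm'.le
  have := hF.apply_le_self hm
  omega

theorem frobeniusIndex_lt (hF : IsFrobenius lam N d P Q) {m : ℕ} (hm : m < N) :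
    frobeniusIndex lam d Q m < N := by
  unfold frobeniusIndex
  split_ifs with hmd
  · have := hF.leg_add_lt hmd; omega
  · omega

theorem injective_frobeniusIndex (hF : IsFrobenius lam N d P Q) :
    Function.Injective (frobeniusIndex lam d Q) := by
  intro m m' he
  unfold frobeniusIndex at he
  wlog hlt : m < m' generalizing m m'
  · rcases (not_lt.mp hlt).lt_or_eq with h | h
    · exact (this he.symm h).symm
    · exact h.symm
  split_ifs at he with hm hm'
  · exact absurd he (hF.leg_strictAnti hlt hm').ne'
  · exact absurd he (hF.leg_ne_sub hm (not_lt.mp hm'))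
  · omega
  · exact absurd he (hF.sub_apply_lt_sub_apply (not_lt.mp hm) hlt).ne

noncomputable def perm (hF : IsFrobenius lam N d P Q) : Equiv.Perm (Fin N) :=
  Equiv.ofBijective (fun m => ⟨frobeniusIndex lam d Q m, hF.frobeniusIndex_lt m.isLt⟩)
    (Finite.injective_iff_bijective.mp fun _ _ he =>
      Fin.ext (hF.injective_frobeniusIndex (Fin.mk.inj_iff.mp he)))

theorem perm_apply_val (hF : IsFrobenius lam N d P Q) (m : Fin N) :
    (hF.perm m : ℕ) = frobeniusIndex lam d Q m := rfl

theorem perm_castLE (hF : IsFrobenius lam N d P Q) (b : Fin d) :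
    (hF.perm (Fin.castLE hF.d_le b) : ℕ) = Q b := by
  simp [perm_apply_val, frobeniusIndex]

theorem sign_perm (hF : IsFrobenius lam N d P Q) :
    Equiv.Perm.sign hF.perm = ∏ b : Fin d, (-1) ^ Q b := by
  rw [Equiv.Perm.sign_eq_prod_of_strictAnti_castLE hF.d_le]
  · simp only [perm_castLE]
  · intro a b hab
    simp only [Function.comp_apply, Fin.lt_def, perm_castLE]
    exact hF.leg_strictAnti hab b.isLt
  · intro i j hi hij
    simp only [Fin.lt_def, perm_apply_val, frobeniusIndex, if_neg (not_lt.mpr hi),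
      if_neg (not_lt.mpr (hi.trans (Fin.lt_def.mp hij).le))]
    exact hF.sub_apply_lt_sub_apply hi hij

theorem jacobiTrudiMatrix_row_of_lt (hF : IsFrobenius lam N d P Q) (h : ℤ → ℕ → R)
    (m : Fin N) (hm : (m : ℕ) < d) : jacobiTrudiMatrix h lam N m = hookRow h N (P m) := by
  ext j
  simp only [jacobiTrudiMatrix, hookRow, of_apply, hF.arm m hm]
  push_cast
  ring_nf

theorem jacobiTrudiMatrix_row_of_le (hF : IsFrobenius lam N d P Q) (h : ℤ → ℕ → R)
    (m : Fin N) (hm : d ≤ (m : ℕ)) :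
    jacobiTrudiMatrix h lam N m = jacobiTrudiMatrix h 0 N (hF.perm m) := by
  ext j
  simp only [jacobiTrudiMatrix, of_apply, perm_apply_val, frobeniusIndex, if_neg (not_lt.mpr hm),
    Pi.zero_apply, Nat.cast_sub (hF.apply_le_self hm)]
  push_cast
  ring_nf

theorem submatrix_perm_symm_apply_perm_castLE (hF : IsFrobenius lam N d P Q)
    (h : ℤ → ℕ → R) (b : Fin d) :
    (jacobiTrudiMatrix h lam N).submatrix hF.perm.symm id (hF.perm (Fin.castLE hF.d_le b)) =
      hookRow h N (P b) := by
  ext j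
  simp only [submatrix_apply, Equiv.symm_apply_apply, id]
  exact congrFun (hF.jacobiTrudiMatrix_row_of_lt h (Fin.castLE hF.d_le b) b.isLt) j

theorem submatrix_perm_symm_apply_of_notMem (hF : IsFrobenius lam N d P Q) (h : ℤ → ℕ → R)
    (i : Fin N) (hi : i ∉ Set.range (hF.perm ∘ Fin.castLE hF.d_le)) :
    (jacobiTrudiMatrix h lam N).submatrix hF.perm.symm id i = jacobiTrudiMatrix h 0 N i := by
  have hd : d ≤ (hF.perm.symm i : ℕ) := not_lt.mp fun hlt =>
    hi ⟨⟨_, hlt⟩, by simp [Fin.castLE]⟩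
  ext j
  simp [hF.jacobiTrudiMatrix_row_of_le h _ hd]

theorem det_jacobiTrudiMatrix_eq_sign_mul [CommRing R] (hF : IsFrobenius lam N d P Q)
    (h : ℤ → ℕ → R) :
    (jacobiTrudiMatrix h lam N).det = (∏ b : Fin d, (-1 : R) ^ Q b) *
      ((jacobiTrudiMatrix h lam N).submatrix hF.perm.symm id).det := by
  set D := (jacobiTrudiMatrix h lam N).submatrix hF.perm.symm id
  calc (jacobiTrudiMatrix h lam N).det = (D.submatrix hF.perm id).det := by
        simp [D]
    _ = _ := by rw [det_permute, sign_perm hF]; push_cast; rfl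

end IsFrobenius

def hookShape (p q : ℕ) (i : ℕ) : ℕ :=
  if i = 0 then p + 1 else if i ≤ q then 1 else 0

theorem isFrobenius_hookShape {p q N : ℕ} (hqN : q < N) :
    IsFrobenius (hookShape p q) N 1 (fun _ => p) (fun _ => q) where
  antitone i j hij := by unfold hookShape; split_ifs <;> omega
  eq_zero_of_le i hi := by unfold hookShape; split_ifs <;> omega
  lt_iff_lt i := by unfold hookShape; split_ifs <;> omega
  arm a ha := by unfold hookShape; split_ifs <;> omega
  leg a ha j := by unfold hookShape; split_ifs <;> omega

theorem genHookSchur_eq [CommRing R] (h : ℤ → ℕ → R) (h0 : ∀ s, h 0 s = 1)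
    (hneg : ∀ r : ℤ, r < 0 → ∀ s, h r s = 0) (p : ℕ) {N : ℕ} (k : Fin N) :
    genHookSchur h p k =
      (-1) ^ (k : ℕ) * ((jacobiTrudiMatrix h 0 N).updateRow k (hookRow h N p)).det := by
  obtain ⟨q, hqN⟩ := k
  have hF := isFrobenius_hookShape (p := p) hqN
  have hq : hF.perm (Fin.castLE hF.d_le 0) = ⟨q, hqN⟩ := Fin.ext (hF.perm_castLE 0)
  have hD : (jacobiTrudiMatrix h 0 N).updateRow ⟨q, hqN⟩ (hookRow h N p) =
      (jacobiTrudiMatrix h (hookShape p q) N).submatrix hF.perm.symm id := by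
    funext i
    by_cases hi : i = ⟨q, hqN⟩
    · rw [hi, updateRow_self, ← hq, hF.submatrix_perm_symm_apply_perm_castLE]
    · rw [updateRow_ne hi, hF.submatrix_perm_symm_apply_of_notMem]
      rintro ⟨b, rfl⟩
      exact hi (by rw [Subsingleton.elim b 0]; exact hq)
  calc genHookSchur h p q = (jacobiTrudiMatrix h (hookShape p q) (q + 1)).det := by
        unfold genHookSchur jacobiTrudiMatrix hookShape
        congr with i j
        split_ifs <;> first | omega | push_cast; ring_nf
    _ = (jacobiTrudiMatrix h (hookShape p q) N).det :=
        (det_jacobiTrudiMatrix_eq_of_le h h0 hneg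
          (isFrobenius_hookShape q.lt_succ_self).eq_zero_of_le hqN).symm
    _ = _ := by rw [hF.det_jacobiTrudiMatrix_eq_sign_mul, hD]; simp

end Giambelli

open Giambelli in
/-- generalized Giambelli formula. Let `(h_{r,s})_{r∈ℤ,s≥0}` be elements of
a commutative ring with `h_{0,s} = 1` and `h_{r,s} = 0` for `r < 0`.  For a Young diagram
`λ` (antitone `lam : ℕ → ℕ`, `0`-indexed) with `d` diagonal boxes, Frobenius coordinates
`P`, `Q`, and `N, N' ≥ ℓ(λ)`, the generalized Jacobi–Trudi determinant
`s̃_λ = det(h_{λ_i-i+j, j-1})_{i,j=1}^N` satisfies `s̃_λ = det(s̃_{(p_i|q_j)})_{i,j=1}^d`,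
and is independent of the choice of `N ≥ ℓ(λ)`. -/
theorem generalized_giambelli_formula
    {R : Type*} [CommRing R] (h : ℤ → ℕ → R)
    (h0 : ∀ s : ℕ, h 0 s = 1) (hneg : ∀ r : ℤ, r < 0 → ∀ s : ℕ, h r s = 0)
    (lam : ℕ → ℕ) (hmono : Antitone lam)
    (N : ℕ) (hlen : ∀ i, N ≤ i → lam i = 0)
    (N' : ℕ) (hlen' : ∀ i, N' ≤ i → lam i = 0)
    (d : ℕ) (hd : ∀ i : ℕ, i < d ↔ i < lam i)
    (P Q : ℕ → ℕ)
    (hP : ∀ a, a < d → lam a = P a + a + 1)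
    (hQ : ∀ a, a < d → {j : ℕ | a < lam j}.ncard = Q a + a + 1) :
    Matrix.det (Matrix.of fun i j : Fin N =>
        h ((lam i : ℤ) - (i : ℕ) + (j : ℕ)) (j : ℕ))
      = Matrix.det (Matrix.of fun a b : Fin d => genHookSchur h (P a) (Q b)) ∧
    Matrix.det (Matrix.of fun i j : Fin N =>
        h ((lam i : ℤ) - (i : ℕ) + (j : ℕ)) (j : ℕ))
      = Matrix.det (Matrix.of fun i j : Fin N' =>
          h ((lam i : ℤ) - (i : ℕ) + (j : ℕ)) (j : ℕ)) := by
  refine ⟨?_, det_jacobiTrudiMatrix_eq h h0 hneg hlen hlen'⟩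
  have hF : IsFrobenius lam N d P Q :=
    ⟨hmono, hlen, hd, hP, fun a ha => lt_iff_lt_of_ncard_eq hmono hlen (hQ a ha)⟩
  set q := hF.perm ∘ Fin.castLE hF.d_le
  have hq (b : Fin d) : (q b : ℕ) = Q b := hF.perm_castLE b
  have hhook (a b : Fin d) : genHookSchur h (P a) (Q b) =
      (-1) ^ Q b * ((jacobiTrudiMatrix h 0 N).updateRow (q b) (hookRow h N (P a))).det := by
    rw [← hq b, genHookSchur_eq h h0 hneg]
  calc (jacobiTrudiMatrix h lam N).det
      = (∏ b : Fin d, (-1 : R) ^ Q b) *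
          ((jacobiTrudiMatrix h lam N).submatrix hF.perm.symm id).det :=
        hF.det_jacobiTrudiMatrix_eq_sign_mul h
    _ = (∏ b : Fin d, (-1 : R) ^ Q b) * (of fun a b : Fin d =>
          ((jacobiTrudiMatrix h 0 N).updateRow (q b) (hookRow h N (P a))).det).det := by
        rw [det_det_updateRow _ (det_jacobiTrudiMatrix_zero h h0 hneg N) q
          (hF.perm.injective.comp (Fin.castLE_injective _)) _ _
          (hF.submatrix_perm_symm_apply_perm_castLE h) (hF.submatrix_perm_symm_apply_of_notMem h)]
    _ = _ := by
        rw [← det_mul_row]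
        simp only [hhook, of_apply]
end
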